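/- Q̲* x-relationship: for any history h with τ = g(h) and decision vector x ∈ B^d, and any i ≤ d, Q̲*(τ ⟨x o r_⊥⟩_{<i}, x_i) = γ^((d-i)/d) · Q*(h, Π*(h, x_{≤i})), where Π*(h, x_{≤i}) ∈ argmax_{a ∈ A(x_{≤i})} Q*(h, a). Equivalently Q̲*(τ ⟨x o r_⊥⟩_{<i}, x_i) = λ^(d-i) max_{a ∈ A(x_{≤i})} Q*(h, a). In particular for i = d, Q̲*(τ ⟨x o r_⊥⟩_{<d}, x_d) = Q*(h, D(x)). -/

import Mathlib

/-- Finite interaction histories: an initial observation-reward pair followed by a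
list of (decision, observation, reward) triples. -/
abbrev Hist (O R A : Type) : Type := (O × R) × List (A × O × R)

namespace Seq

variable {O R A B : Type} {m : ℕ}

/-- The most recent observation of a history. -/
def lastObs (h : Hist O R A) : O :=
  match h.2.getLast? with
  | some s => s.2.1
  | none => h.1.1

/-- Extending a history by one interaction step. -/
def ext (h : Hist O R A) (a : A) (o : O) (r : R) : Hist O R A :=
  (h.1, h.2 ++ [(a, o, r)])

/-- Appending a block of steps to a history. -/
def app (τ : Hist O R B) (l : List (B × O × R)) : Hist O R B := (τ.1, τ.2 ++ l)

/-- `inter x o r⊥ i` is the interleaved block `⟨x o r⊥⟩_{<i}`: the first `i`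
decision symbols of the code `x ∈ B^(m+1)`, each followed by the dummy
observation `o` and dummy reward `r⊥`. -/
def inter (x : Fin (m + 1) → B) (o : O) (rbot : R) (i : ℕ) : List (B × O × R) :=
  ((List.ofFn x).take i).map fun b => (b, o, rbot)

/-- The body of the history transformation `g`, keeping track of the current last
observation. Each original step `(a, o', r')` taken at last observation `o` is
replaced by `C(a)₁ o r⊥ … C(a)_{d-1} o r⊥ C(a)_d o' r'` with `d = m + 1`. -/
def gList (C : A → Fin (m + 1) → B) (rbot : R) : O → List (A × O × R) → List (B × O × R)
  | _, [] => []
  | o, (a, o', r') :: t =>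
      (inter (C a) o rbot m ++ [(C a (Fin.last m), o', r')]) ++ gList C rbot o' t

/-- The history transformation function `g : H → H̲` sequentializing each action
into its `B`-ary code. -/
def g (C : A → Fin (m + 1) → B) (rbot : R) (h : Hist O R A) : Hist O R B :=
  (h.1, gList C rbot h.1.1 h.2)

end Seq

/-!
On a code-prefix history `τ ⟨x o r⊥⟩_{<i}` the sequentialized environment emits only the dummy
percept (with reward `0`) until the last code symbol, where it behaves like `P` on the decoded
action. Hence the claimed values `λ^(d-i) max_{a ∈ A(x_{≤i})} Q*(h, a)` obey the same Bellman
equations as `Q̲*` on these histories: a dummy step multiplies by `λ` and maximises over the next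
symbol, which merges the classes `A(x_{≤i+1})` into `A(x_{≤i})`, and a complete step is the Bellman
equation of `P` because `λ^d = γ`. So the supremum `E` of the discrepancies over all such histories
satisfies `E ≤ λ E`, and `λ < 1` forces `E = 0`.
-/

open Function Set

namespace Seq

variable {O R A B : Type} {m : ℕ}

lemma lastObs_eq_foldl (h : Hist O R A) : lastObs h = h.2.foldl (fun _ s => s.2.1) h.1.1 := by
  obtain ⟨y, l⟩ := h
  induction l using List.reverseRecOn with
  | nil => rfl
  | append_singleton l s _ => simp [lastObs, List.foldl_append]

lemma lastObs_app (τ : Hist O R B) (l : List (B × O × R)) :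
    lastObs (app τ l) = l.foldl (fun _ s => s.2.1) (lastObs τ) := by
  simp [lastObs_eq_foldl, app, List.foldl_append]

lemma ext_app (τ : Hist O R B) (l : List (B × O × R)) (b : B) (o : O) (r : R) :
    ext (app τ l) b o r = app τ (l ++ [(b, o, r)]) := by
  simp [ext, app]

lemma app_nil (τ : Hist O R B) : app τ [] = τ := by
  simp [app]

lemma length_inter (x : Fin (m + 1) → B) (o : O) (rbot : R) {k : ℕ} (hk : k ≤ m + 1) :
    (inter x o rbot k).length = k := by
  simp [inter, hk]

lemma foldl_inter (x : Fin (m + 1) → B) (o : O) (rbot : R) (k : ℕ) :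
    (inter x o rbot k).foldl (fun _ s => s.2.1) o = o := by
  rw [inter, List.foldl_map]
  exact List.foldl_fixed' (fun _ => rfl) _

lemma inter_succ (x : Fin (m + 1) → B) (o : O) (rbot : R) (k : Fin (m + 1)) :
    inter x o rbot (k + 1) = inter x o rbot k ++ [(x k, o, rbot)] := by
  simp [inter, List.take_add_one, -List.ofFn_succ, Nat.lt_succ_iff.mp k.isLt]

lemma inter_congr {x y : Fin (m + 1) → B} {k : ℕ} (hxy : ∀ j : Fin (m + 1), j.val < k → x j = y j)
    (o : O) (rbot : R) : inter x o rbot k = inter y o rbot k := by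
  unfold inter
  congr 1
  refine List.ext_getElem (by simp) fun i hx hy => ?_
  simp only [List.length_take, List.length_ofFn] at hx
  simpa only [List.getElem_take, List.getElem_ofFn] using hxy ⟨i, by omega⟩ (by simp; omega)

lemma length_gList (C : A → Fin (m + 1) → B) (rbot : R) (o : O) (t : List (A × O × R)) :
    (gList C rbot o t).length = (m + 1) * t.length := by
  induction t generalizing o with
  | nil => rfl
  | cons s t ih =>
    simp [gList, ih, inter]
    ring

lemma foldl_gList (C : A → Fin (m + 1) → B) (rbot : R) (o : O) (t : List (A × O × R)) :
    (gList C rbot o t).foldl (fun _ s => s.2.1) o = t.foldl (fun _ s => s.2.1) o := by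
  induction t generalizing o with
  | nil => rfl
  | cons s t ih => simp [gList, List.foldl_append, ih]

lemma gList_concat (C : A → Fin (m + 1) → B) (rbot : R) (o : O) (t : List (A × O × R))
    (a : A) (o' : O) (r' : R) :
    gList C rbot o (t ++ [(a, o', r')]) = gList C rbot o t ++
      (inter (C a) (t.foldl (fun _ s => s.2.1) o) rbot m ++ [(C a (Fin.last m), o', r')]) := by
  induction t generalizing o with
  | nil => simp [gList]
  | cons s t ih => simp [gList, ih]

lemma g_ext (C : A → Fin (m + 1) → B) (rbot : R) (h : Hist O R A) (a : A) (o' : O) (r' : R) :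
    g C rbot (ext h a o' r') =
      app (g C rbot h) (inter (C a) (lastObs h) rbot m ++ [(C a (Fin.last m), o', r')]) := by
  simp [g, ext, app, gList_concat, lastObs_eq_foldl]

end Seq

open Seq

/-- The history `τ ⟨x o r⊥⟩_{<k}` with `τ = g(h)` and `o` the last observation of `h`. -/
def prefixHist {O R A B : Type} {m : ℕ} (C : A → Fin (m + 1) → B) (rbot : R) (h : Hist O R A)
    (x : Fin (m + 1) → B) (k : ℕ) : Hist O R B :=
  app (g C rbot h) (inter x (lastObs h) rbot k)

section prefixHist

variable {O R A B : Type} {m : ℕ} (C : A → Fin (m + 1) → B) (rbot : R) (h : Hist O R A)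

lemma length_prefixHist (x : Fin (m + 1) → B) {k : ℕ} (hk : k ≤ m + 1) :
    (prefixHist C rbot h x k).2.length = (m + 1) * h.2.length + k := by
  simp [prefixHist, app, g, length_gList, length_inter _ _ _ hk]

lemma lastObs_prefixHist (x : Fin (m + 1) → B) (k : ℕ) :
    lastObs (prefixHist C rbot h x k) = lastObs h := by
  rw [prefixHist, lastObs_app, lastObs_eq_foldl (g C rbot h), g, foldl_gList,
    ← lastObs_eq_foldl, foldl_inter]

lemma ext_prefixHist (x : Fin (m + 1) → B) (k : Fin (m + 1)) :
    ext (prefixHist C rbot h x k) (x k) (lastObs h) rbot = prefixHist C rbot h x (k + 1) := by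
  rw [prefixHist, prefixHist, ext_app, inter_succ]

lemma prefixHist_congr {x y : Fin (m + 1) → B} {k : ℕ}
    (hxy : ∀ j : Fin (m + 1), j.val < k → x j = y j) :
    prefixHist C rbot h x k = prefixHist C rbot h y k := by
  rw [prefixHist, prefixHist, inter_congr hxy]

lemma prefixHist_zero (x : Fin (m + 1) → B) : prefixHist C rbot h x 0 = g C rbot h :=
  app_nil _

lemma ext_prefixHist_last (a : A) (o' : O) (r' : R) :
    ext (prefixHist C rbot h (C a) m) (C a (Fin.last m)) o' r' = g C rbot (ext h a o' r') := by
  rw [prefixHist, ext_app, g_ext]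

end prefixHist

lemma bddAbove_range_of_abs_le {ι : Sort*} {f : ι → ℝ} {M : ℝ} (hf : ∀ i, |f i| ≤ M) :
    BddAbove (range f) :=
  ⟨M, forall_mem_range.2 fun i => (abs_le.1 (hf i)).2⟩

lemma abs_ciSup_le {ι : Sort*} [Nonempty ι] {f : ι → ℝ} {M : ℝ} (hf : ∀ i, |f i| ≤ M) :
    |⨆ i, f i| ≤ M :=
  abs_le.2 ⟨(abs_le.1 (hf (Classical.arbitrary ι))).1.trans
      (le_ciSup (bddAbove_range_of_abs_le hf) _),
    ciSup_le fun i => (abs_le.1 (hf i)).2⟩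

lemma abs_ciSup_sub_ciSup_le {ι : Sort*} [Nonempty ι] {f g : ι → ℝ} {ε : ℝ}
    (hf : BddAbove (range f)) (hfg : ∀ i, |f i - g i| ≤ ε) : |(⨆ i, f i) - ⨆ i, g i| ≤ ε := by
  have hg : BddAbove (range g) := by
    obtain ⟨M, hM⟩ := hf
    refine ⟨M + ε, forall_mem_range.2 fun i => ?_⟩
    linarith [(abs_le.1 (hfg i)).1, hM (mem_range_self i)]
  refine abs_sub_le_iff.2 ⟨?_, ?_⟩ <;> rw [sub_le_iff_le_add]
  · exact ciSup_le fun i => by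
      linarith [(abs_le.1 (hfg i)).2, le_ciSup hg i]
  · exact ciSup_le fun i => by
      linarith [(abs_le.1 (hfg i)).1, le_ciSup hf i]

lemma ciSup_ciSup_subtype_eq {α β γ : Type*} [ConditionallyCompleteLattice γ] [Nonempty β]
    {f : α → γ} (hf : BddAbove (range f)) {p : β → α → Prop} {q : α → Prop}
    (hp : ∀ b, ∃ a, p b a) (hq : ∀ a, q a ↔ ∃ b, p b a) :
    ⨆ b, ⨆ a : {a // p b a}, f a = ⨆ a : {a // q a}, f a := by
  obtain ⟨M, hM⟩ := hf
  have hsub (s : α → Prop) : BddAbove (range fun a : {a // s a} => f a) :=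
    ⟨M, forall_mem_range.2 fun a => hM (mem_range_self _)⟩
  have hfib (b : β) : Nonempty {a // p b a} := let ⟨a, ha⟩ := hp b; ⟨⟨a, ha⟩⟩
  have hout : BddAbove (range fun b => ⨆ a : {a // p b a}, f a) :=
    ⟨M, forall_mem_range.2 fun b => ciSup_le fun a => hM (mem_range_self _)⟩
  have : Nonempty {a // q a} :=
    let ⟨a, ha⟩ := hp (Classical.arbitrary β); ⟨⟨a, (hq a).2 ⟨_, ha⟩⟩⟩
  apply le_antisymm
  · exact ciSup_le fun b => ciSup_le fun a => le_ciSup (hsub q) ⟨a, (hq a).2 ⟨b, a.2⟩⟩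
  · refine ciSup_le fun a => ?_
    obtain ⟨b, hb⟩ := (hq a).1 a.2
    exact (le_ciSup (hsub (p b)) ⟨a, hb⟩).trans (le_ciSup hout b)

lemma eq_zero_of_bound_contracts {ι : Type*} {e : ι → ℝ} {c : ℝ} (hc : c < 1)
    (he : ∀ i, 0 ≤ e i) (hbdd : BddAbove (range e))
    (hcontr : ∀ E, (∀ i, e i ≤ E) → ∀ i, e i ≤ c * E) (i : ι) : e i = 0 := by
  have : Nonempty ι := ⟨i⟩
  have hle : e i ≤ ⨆ j, e j := le_ciSup hbdd i
  have hsup : ⨆ j, e j ≤ c * ⨆ j, e j := ciSup_le (hcontr _ fun j => le_ciSup hbdd j)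
  nlinarith [he i]

lemma abs_sum_mul_le_of_sum_eq_one {ι : Type*} [Fintype ι] {p u : ι → ℝ} {c : ℝ}
    (hp0 : ∀ i, 0 ≤ p i) (hp1 : ∑ i, p i = 1) (hu : ∀ i, |u i| ≤ c) : |∑ i, p i * u i| ≤ c :=
  calc |∑ i, p i * u i| ≤ ∑ i, |p i * u i| := Finset.abs_sum_le_sum_abs _ _
    _ ≤ ∑ i, p i * c := Finset.sum_le_sum fun i _ => by
        rw [abs_mul, abs_of_nonneg (hp0 i)]
        exact mul_le_mul_of_nonneg_left (hu i) (hp0 i)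
    _ = c := by rw [← Finset.sum_mul, hp1, one_mul]

/-- `max_{a ∈ A(x_{≤k+1})} f a` in the paper's 1-based indexing of code positions. -/
noncomputable def consistentSup {A B : Type} {m : ℕ} (C : A → Fin (m + 1) → B) (f : A → ℝ)
    (x : Fin (m + 1) → B) (k : Fin (m + 1)) : ℝ :=
  ⨆ a : {a : A // ∀ j : Fin (m + 1), j ≤ k → C a j = x j}, f a.val

section consistentSup

variable {A B : Type} {m : ℕ} {C : A → Fin (m + 1) → B} {D : (Fin (m + 1) → B) → A}

lemma nonempty_consistent (hCD : ∀ x, C (D x) = x) (x : Fin (m + 1) → B) (k : Fin (m + 1)) :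
    Nonempty {a : A // ∀ j : Fin (m + 1), j ≤ k → C a j = x j} :=
  ⟨⟨D x, fun j _ => by rw [hCD]⟩⟩

lemma abs_consistentSup_le (hCD : ∀ x, C (D x) = x) {f : A → ℝ} {M : ℝ} (hf : ∀ a, |f a| ≤ M)
    (x : Fin (m + 1) → B) (k : Fin (m + 1)) : |consistentSup C f x k| ≤ M :=
  have := nonempty_consistent hCD x k
  abs_ciSup_le fun a => hf a.val

lemma consistentSup_last (hDC : ∀ a, D (C a) = a) (hCD : ∀ x, C (D x) = x) (f : A → ℝ)
    (x : Fin (m + 1) → B) : consistentSup C f x (Fin.last m) = f (D x) := by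
  have := nonempty_consistent hCD x (Fin.last m)
  have hD (a : {a : A // ∀ j : Fin (m + 1), j ≤ Fin.last m → C a j = x j}) : a.val = D x := by
    rw [← hDC a.val, funext fun j => a.2 j (Fin.le_last j)]
  simp only [consistentSup, hD, ciSup_const]

lemma iSup_consistentSup_update_succ (hCD : ∀ x, C (D x) = x) {f : A → ℝ}
    (hf : BddAbove (range f)) (x : Fin (m + 1) → B) (k : Fin m) :
    ⨆ b, consistentSup C f (update x k.succ b) k.succ = consistentSup C f x k.castSucc := by
  have : Nonempty B := ⟨x 0⟩
  refine ciSup_ciSup_subtype_eq hf (fun b => ⟨D _, fun j _ => by rw [hCD]⟩) fun a => ?_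
  constructor
  · intro ha
    refine ⟨C a k.succ, fun j hj => ?_⟩
    rcases eq_or_ne j k.succ with rfl | hne
    · rw [update_self]
    · rw [update_of_ne hne]
      exact ha j (Fin.le_castSucc_iff.2 (lt_of_le_of_ne hj hne))
  · rintro ⟨b, hb⟩ j hj
    have hlt : j < k.succ := Fin.le_castSucc_iff.1 hj
    rw [hb j hlt.le, update_of_ne hlt.ne]

lemma iSup_consistentSup_zero [Nonempty B] (hCD : ∀ x, C (D x) = x) {f : A → ℝ}
    (hf : BddAbove (range f)) : ⨆ b, consistentSup C f (fun _ => b) 0 = ⨆ a, f a := by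
  unfold consistentSup
  rw [ciSup_ciSup_subtype_eq hf (fun b => ⟨D _, fun j _ => by rw [hCD]⟩)
    (q := fun _ => True) fun a => ⟨fun _ => ⟨C a 0, fun j hj => by rw [Fin.le_zero_iff.1 hj]⟩,
      fun _ => trivial⟩]
  exact (Equiv.subtypeUnivEquiv fun _ => trivial).iSup_comp (g := f)

end consistentSup

section Bellman

variable {O R A B : Type} {m : ℕ}

noncomputable def bellmanGap (C : A → Fin (m + 1) → B) (rbot : R) (lam : ℝ)
    (Q : Hist O R A → A → ℝ) (Qb : Hist O R B → B → ℝ) (h : Hist O R A) (x : Fin (m + 1) → B)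
    (k : Fin (m + 1)) : ℝ :=
  |Qb (prefixHist C rbot h x k) (x k) - lam ^ (m - k.val) * consistentSup C (Q h) x k|

variable {rbot : R} {lam : ℝ} {C : A → Fin (m + 1) → B} {D : (Fin (m + 1) → B) → A}
  {Q : Hist O R A → A → ℝ} {Qb : Hist O R B → B → ℝ} {MQ MQb E : ℝ}

lemma bellmanGap_le (hlam0 : 0 ≤ lam) (hlam1 : lam ≤ 1) (hCD : ∀ x, C (D x) = x)
    (hQM : ∀ h a, |Q h a| ≤ MQ) (hQbM : ∀ τ b, |Qb τ b| ≤ MQb) (h : Hist O R A)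
    (x : Fin (m + 1) → B) (k : Fin (m + 1)) : bellmanGap C rbot lam Q Qb h x k ≤ MQb + MQ := by
  refine (abs_sub _ _).trans (add_le_add (hQbM _ _) ?_)
  rw [abs_mul, abs_of_nonneg (pow_nonneg hlam0 _)]
  exact (mul_le_of_le_one_left (abs_nonneg _) (pow_le_one₀ hlam0 hlam1)).trans
    (abs_consistentSup_le hCD (hQM h) x k)

variable [Fintype O] [Fintype R]

def SatisfiesBellman {X : Type} (P : Hist O R X → X → O × R → ℝ) (ρ : R → ℝ) (γ : ℝ)
    (Q : Hist O R X → X → ℝ) : Prop :=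
  ∀ h a, Q h a = ∑ o' : O, ∑ r' : R, P h a (o', r') * (ρ r' + γ * ⨆ a', Q (ext h a o' r') a')

variable {ρ : R → ℝ} {P : Hist O R A → A → O × R → ℝ} {Pb : Hist O R B → B → O × R → ℝ}

lemma SatisfiesBellman.prefixHist_castSucc [DecidableEq O] [DecidableEq R] (hρ : ρ rbot = 0)
    (hPbpartial : ∀ τ : Hist O R B, (τ.2.length + 1) % (m + 1) ≠ 0 → ∀ x o' r',
      Pb τ x (o', r') = if o' = lastObs τ ∧ r' = rbot then 1 else 0)
    (hQb : SatisfiesBellman Pb ρ lam Qb) (h : Hist O R A) (x : Fin (m + 1) → B) (k : Fin m) :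
    Qb (prefixHist C rbot h x k.castSucc) (x k.castSucc) =
      lam * ⨆ b, Qb (prefixHist C rbot h (update x k.succ b) k.succ) b := by
  have hpartial : ((prefixHist C rbot h x k.castSucc).2.length + 1) % (m + 1) ≠ 0 := by
    rw [length_prefixHist _ _ _ _ (by simp; omega), Fin.val_castSucc, add_assoc,
      Nat.mul_add_mod_self_left, Nat.mod_eq_of_lt (by omega)]
    omega
  have hnext (b : B) : ext (prefixHist C rbot h x k.castSucc) (x k.castSucc) (lastObs h) rbot =
      prefixHist C rbot h (update x k.succ b) k.succ := by
    rw [ext_prefixHist, Fin.val_succ, ← Fin.val_castSucc]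
    exact prefixHist_congr _ _ _ fun j hj =>
      (update_of_ne (by rintro rfl; simp at hj) b x).symm
  rw [hQb]
  simp only [hPbpartial _ hpartial, lastObs_prefixHist, ite_and, ite_mul, one_mul, zero_mul,
    Finset.sum_ite_irrel, Finset.sum_const_zero, Fintype.sum_ite_eq', hρ, zero_add]
  exact congrArg (lam * ·) (iSup_congr fun b => by rw [hnext b])

lemma SatisfiesBellman.prefixHist_last
    (hPbcomplete : ∀ (h : Hist O R A) (a : A) (o' : O) (r' : R),
      Pb (app (g C rbot h) (inter (C a) (lastObs h) rbot m)) (C a (Fin.last m)) (o', r') =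
        P h a (o', r'))
    (hQb : SatisfiesBellman Pb ρ lam Qb) (h : Hist O R A) (a : A) :
    Qb (prefixHist C rbot h (C a) m) (C a (Fin.last m)) =
      ∑ o' : O, ∑ r' : R,
        P h a (o', r') * (ρ r' + lam * ⨆ b, Qb (g C rbot (ext h a o' r')) b) := by
  rw [hQb]
  refine Finset.sum_congr rfl fun o' _ => Finset.sum_congr rfl fun r' _ => ?_
  rw [ext_prefixHist_last]
  exact congrArg (· * _) (hPbcomplete h a o' r')

lemma bellmanGap_castSucc_le [DecidableEq O] [DecidableEq R] (hlam : 0 ≤ lam)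
    (hCD : ∀ x, C (D x) = x) (hQM : ∀ h a, |Q h a| ≤ MQ) (hQbM : ∀ τ b, |Qb τ b| ≤ MQb)
    (hρ : ρ rbot = 0)
    (hPbpartial : ∀ τ : Hist O R B, (τ.2.length + 1) % (m + 1) ≠ 0 → ∀ x o' r',
      Pb τ x (o', r') = if o' = lastObs τ ∧ r' = rbot then 1 else 0)
    (hQb : SatisfiesBellman Pb ρ lam Qb) (hE : ∀ h x k, bellmanGap C rbot lam Q Qb h x k ≤ E)
    (h : Hist O R A) (x : Fin (m + 1) → B) (k : Fin m) :
    bellmanGap C rbot lam Q Qb h x k.castSucc ≤ lam * E := by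
  have : Nonempty B := ⟨x 0⟩
  have htarget : lam ^ (m - k.castSucc.val) * consistentSup C (Q h) x k.castSucc =
      lam * ⨆ b, lam ^ (m - k.succ.val) * consistentSup C (Q h) (update x k.succ b) k.succ := by
    rw [← Real.mul_iSup_of_nonneg (pow_nonneg hlam _),
      iSup_consistentSup_update_succ hCD (bddAbove_range_of_abs_le (hQM h)), ← mul_assoc,
      ← pow_succ', Fin.val_castSucc, Fin.val_succ]
    congr 2
    omega
  rw [bellmanGap, hQb.prefixHist_castSucc hρ hPbpartial, htarget, ← mul_sub, abs_mul,
    abs_of_nonneg hlam]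
  refine mul_le_mul_of_nonneg_left (abs_ciSup_sub_ciSup_le
    (bddAbove_range_of_abs_le fun b => hQbM _ b) fun b => ?_) hlam
  simpa only [bellmanGap, update_self] using hE h (update x k.succ b) k.succ

lemma bellmanGap_last_le (hlam : 0 ≤ lam) (hDC : ∀ a, D (C a) = a) (hCD : ∀ x, C (D x) = x)
    (hQM : ∀ h a, |Q h a| ≤ MQ) (hQbM : ∀ τ b, |Qb τ b| ≤ MQb)
    (hP0 : ∀ h a y, 0 ≤ P h a y) (hP1 : ∀ h a, ∑ y : O × R, P h a y = 1)
    (hQ : SatisfiesBellman P ρ (lam ^ (m + 1)) Q)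
    (hPbcomplete : ∀ (h : Hist O R A) (a : A) (o' : O) (r' : R),
      Pb (app (g C rbot h) (inter (C a) (lastObs h) rbot m)) (C a (Fin.last m)) (o', r') =
        P h a (o', r'))
    (hQb : SatisfiesBellman Pb ρ lam Qb) (hE : ∀ h x k, bellmanGap C rbot lam Q Qb h x k ≤ E)
    (h : Hist O R A) (x : Fin (m + 1) → B) :
    bellmanGap C rbot lam Q Qb h x (Fin.last m) ≤ lam * E := by
  have : Nonempty B := ⟨x 0⟩
  obtain ⟨a, rfl⟩ : ∃ a, C a = x := ⟨D x, hCD x⟩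
  have hnext (o' : O) (r' : R) : |(⨆ b, Qb (g C rbot (ext h a o' r')) b) -
      lam ^ m * ⨆ a', Q (ext h a o' r') a'| ≤ E := by
    rw [← iSup_consistentSup_zero hCD (bddAbove_range_of_abs_le (hQM _)),
      Real.mul_iSup_of_nonneg (pow_nonneg hlam m)]
    refine abs_ciSup_sub_ciSup_le (bddAbove_range_of_abs_le fun b => hQbM _ b) fun b => ?_
    simpa only [bellmanGap, prefixHist_zero, Fin.val_zero, Nat.sub_zero]
      using hE (ext h a o' r') (fun _ => b) 0
  rw [bellmanGap, Fin.val_last, Nat.sub_self, pow_zero, one_mul, consistentSup_last hDC hCD,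
    hDC, hQb.prefixHist_last hPbcomplete, hQ h a]
  calc _ = |∑ y : O × R, P h a y * (lam * ((⨆ b, Qb (g C rbot (ext h a y.1 y.2)) b) -
          lam ^ m * ⨆ a', Q (ext h a y.1 y.2) a'))| := by
        rw [Fintype.sum_prod_type, ← Finset.sum_sub_distrib]
        congr 1
        refine Finset.sum_congr rfl fun o' _ => ?_
        rw [← Finset.sum_sub_distrib]
        exact Finset.sum_congr rfl fun r' _ => by ring
    _ ≤ lam * E := abs_sum_mul_le_of_sum_eq_one (hP0 h a) (hP1 h a) fun y => by
        rw [abs_mul, abs_of_nonneg hlam]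
        exact mul_le_mul_of_nonneg_left (hnext y.1 y.2) hlam

end Bellman

theorem qbar_x_relationship_general {O R A B : Type} [Fintype O] [Fintype R]
    [DecidableEq O] [DecidableEq R] {m : ℕ}
    (ρ : R → ℝ) (rbot : R) (hρ : ρ rbot = 0)
    (γ lam : ℝ) (hγ1 : γ < 1) (hlam0 : 0 ≤ lam)
    (hlamd : lam ^ (m + 1) = γ)
    (C : A → Fin (m + 1) → B) (D : (Fin (m + 1) → B) → A)
    (hDC : ∀ a, D (C a) = a) (hCD : ∀ x, C (D x) = x)
    (P : Hist O R A → A → (O × R) → ℝ)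
    (hP0 : ∀ h a y, 0 ≤ P h a y) (hP1 : ∀ h a, ∑ y : O × R, P h a y = 1)
    (Q : Hist O R A → A → ℝ) (hQbdd : ∃ M, ∀ h a, |Q h a| ≤ M)
    (hQOBE : ∀ h a, Q h a = ∑ o' : O, ∑ r' : R,
        P h a (o', r') * (ρ r' + γ * ⨆ a', Q (Seq.ext h a o' r') a'))
    (Pb : Hist O R B → B → (O × R) → ℝ)
    (hPbpartial : ∀ τ : Hist O R B, (τ.2.length + 1) % (m + 1) ≠ 0 → ∀ x o' r',
        Pb τ x (o', r') = if o' = Seq.lastObs τ ∧ r' = rbot then 1 else 0)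
    (hPbcomplete : ∀ (h : Hist O R A) (a : A) (o' : O) (r' : R),
        Pb (Seq.app (Seq.g C rbot h) (Seq.inter (C a) (Seq.lastObs h) rbot m))
            (C a (Fin.last m)) (o', r')
          = P h a (o', r'))
    (Qb : Hist O R B → B → ℝ) (hQbbdd : ∃ M, ∀ τ x, |Qb τ x| ≤ M)
    (hQbOBE : ∀ τ x, Qb τ x = ∑ o' : O, ∑ r' : R,
        Pb τ x (o', r') * (ρ r' + lam * ⨆ x', Qb (Seq.ext τ x o' r') x')) :
    (∀ (h : Hist O R A) (x : Fin (m + 1) → B) (k : Fin (m + 1)),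
      Qb (Seq.app (Seq.g C rbot h) (Seq.inter x (Seq.lastObs h) rbot k.val)) (x k)
        = lam ^ (m - k.val) *
          ⨆ a : {a : A // ∀ j : Fin (m + 1), j ≤ k → C a j = x j}, Q h a.val) ∧
    ∀ (h : Hist O R A) (x : Fin (m + 1) → B),
      Qb (Seq.app (Seq.g C rbot h) (Seq.inter x (Seq.lastObs h) rbot m))
          (x (Fin.last m))
        = Q h (D x) := by
  subst hlamd
  obtain ⟨MQ, hQM⟩ := hQbdd
  obtain ⟨MQb, hQbM⟩ := hQbbdd
  have hlam1 : lam < 1 := (pow_lt_one_iff_of_nonneg hlam0 m.succ_ne_zero).1 hγ1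
  have hgap (h : Hist O R A) (x : Fin (m + 1) → B) (k : Fin (m + 1)) :
      bellmanGap C rbot lam Q Qb h x k = 0 := by
    refine eq_zero_of_bound_contracts (c := lam) (i := (h, x, k))
      (e := fun p => bellmanGap C rbot lam Q Qb p.1 p.2.1 p.2.2) hlam1 (fun _ => abs_nonneg _)
      ⟨MQb + MQ, forall_mem_range.2 fun p => bellmanGap_le hlam0 hlam1.le hCD hQM hQbM _ _ _⟩
      fun E hE ⟨h, x, k⟩ => ?_
    obtain ⟨k, rfl⟩ | rfl := k.eq_castSucc_or_eq_last
    · exact bellmanGap_castSucc_le hlam0 hCD hQM hQbM hρ hPbpartial hQbOBE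
        (fun h x k => hE (h, x, k)) h x k
    · exact bellmanGap_last_le hlam0 hDC hCD hQM hQbM hP0 hP1 hQOBE hPbcomplete hQbOBE
        (fun h x k => hE (h, x, k)) h x
  have hvalue (h : Hist O R A) (x : Fin (m + 1) → B) (k : Fin (m + 1)) :
      Qb (prefixHist C rbot h x k) (x k) = lam ^ (m - k.val) * consistentSup C (Q h) x k :=
    sub_eq_zero.1 (abs_eq_zero.1 (hgap h x k))
  refine ⟨hvalue, fun h x => ?_⟩
  have hlast := hvalue h x (Fin.last m)
  rwa [Fin.val_last, Nat.sub_self, pow_zero, one_mul, consistentSup_last hDC hCD] at hlast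

/-- `Q̲*` x-relationship. Let `Q*` be the (bounded) optimal
action-value function of the original environment `P` with discount `γ`, and `Q̲*`
that of the sequentialized environment `P̲` with discount `λ`, `λ^d = γ`
(`d = m+1`, dummy reward `ρ r⊥ = 0`). Then for any history `h` (with
`τ = g(h)`), code `x ∈ B^d` and `1 ≤ i ≤ d` (written `i = k+1`, `k : Fin d`):
`Q̲*(τ⟨x o r⊥⟩_{<i}, x_i) = λ^(d-i) max_{a ∈ A(x_{≤i})} Q*(h,a)`,
and in particular for `i = d`:
`Q̲*(τ⟨x o r⊥⟩_{<d}, x_d) = Q*(h, D x)`. -/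
theorem qbar_x_relationship {O R A B : Type} [Fintype O] [Fintype R] [Fintype A]
    [Fintype B] [DecidableEq O] [DecidableEq R] [Nonempty A] [Nonempty B] {m : ℕ}
    (ρ : R → ℝ) (rbot : R) (hρ : ρ rbot = 0)
    (γ lam : ℝ) (hγ0 : 0 ≤ γ) (hγ1 : γ < 1) (hlam0 : 0 ≤ lam)
    (hlamd : lam ^ (m + 1) = γ)
    (C : A → Fin (m + 1) → B) (D : (Fin (m + 1) → B) → A)
    (hDC : ∀ a, D (C a) = a) (hCD : ∀ x, C (D x) = x)
    (P : Hist O R A → A → (O × R) → ℝ)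
    (hP0 : ∀ h a y, 0 ≤ P h a y) (hP1 : ∀ h a, ∑ y : O × R, P h a y = 1)
    (Q : Hist O R A → A → ℝ) (hQbdd : ∃ M, ∀ h a, |Q h a| ≤ M)
    (hQOBE : ∀ h a, Q h a = ∑ o' : O, ∑ r' : R,
        P h a (o', r') * (ρ r' + γ * ⨆ a', Q (Seq.ext h a o' r') a'))
    (Pb : Hist O R B → B → (O × R) → ℝ)
    (hPb0 : ∀ τ x y, 0 ≤ Pb τ x y) (hPb1 : ∀ τ x, ∑ y : O × R, Pb τ x y = 1)
    (hPbpartial : ∀ τ : Hist O R B, (τ.2.length + 1) % (m + 1) ≠ 0 → ∀ x o' r',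
        Pb τ x (o', r') = if o' = Seq.lastObs τ ∧ r' = rbot then 1 else 0)
    (hPbcomplete : ∀ (h : Hist O R A) (a : A) (o' : O) (r' : R),
        Pb (Seq.app (Seq.g C rbot h) (Seq.inter (C a) (Seq.lastObs h) rbot m))
            (C a (Fin.last m)) (o', r')
          = P h a (o', r'))
    (Qb : Hist O R B → B → ℝ) (hQbbdd : ∃ M, ∀ τ x, |Qb τ x| ≤ M)
    (hQbOBE : ∀ τ x, Qb τ x = ∑ o' : O, ∑ r' : R,
        Pb τ x (o', r') * (ρ r' + lam * ⨆ x', Qb (Seq.ext τ x o' r') x')) :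
    (∀ (h : Hist O R A) (x : Fin (m + 1) → B) (k : Fin (m + 1)),
      Qb (Seq.app (Seq.g C rbot h) (Seq.inter x (Seq.lastObs h) rbot k.val)) (x k)
        = lam ^ (m - k.val) *
          ⨆ a : {a : A // ∀ j : Fin (m + 1), j ≤ k → C a j = x j}, Q h a.val) ∧
    ∀ (h : Hist O R A) (x : Fin (m + 1) → B),
      Qb (Seq.app (Seq.g C rbot h) (Seq.inter x (Seq.lastObs h) rbot m))
          (x (Fin.last m))
        = Q h (D x) :=
  qbar_x_relationship_general ρ rbot hρ γ lam hγ1 hlam0 hlamd C D hDC hCD P hP0 hP1 Q hQbdd hQOBE Pb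
    hPbpartial hPbcomplete Qb hQbbdd hQbOBE
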